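/- arXiv:cs/0406048 — 2 statements merged into one kernel-verified Lean document; each statement's English description precedes it below -/
import Mathlib

section
/- Let G be a d-regular graph on n vertices with second-largest eigenvalue modulus μ = max{λ₁, |λ_{n-1}|}, where λ₀ ≥ λ₁ ≥ ... ≥ λ_{n-1} are the eigenvalues of the adjacency matrix. For any subset S of vertices with |S| = γn, the number e(S) of edges of G with both endpoints in S satisfies |e(S) − (1/2)dγ²n| ≤ (1/2)μγ(1−γ)n. -/
open Matrix Polynomial
open scoped Classical



lemma myCharpolyConj {n R : Type*} [Fintype n] [DecidableEq n] [CommRing R]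
    (U A V : Matrix n n R) (hUV : U * V = 1) :
    (U * A * V).charpoly = A.charpoly := by
  set f : R →+* R[X] := (C : R →+* R[X]) with hf
  have hP : (U.map f) * (V.map f) = 1 := by
    rw [← Matrix.map_mul, hUV]; simp
  have hch : charmatrix (U * A * V) = U.map f * charmatrix A * V.map f := by
    unfold charmatrix
    simp only [RingHom.mapMatrix_apply]
    have hcomm : U.map f * Matrix.scalar n (X : R[X]) =
        Matrix.scalar n (X : R[X]) * U.map f :=
      (Matrix.scalar_commute X (fun r => Commute.all _ _) (U.map f)).symm
    rw [Matrix.mul_sub, Matrix.sub_mul]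
    congr 1
    · rw [hcomm, mul_assoc, hP, mul_one]
    · have : ∀ M N : Matrix n n R, (M * N).map f = M.map f * N.map f := by
        intro M N
        have := congrArg (fun M : Matrix n n R[X] => M) (f.mapMatrix.map_mul M N)
        simpa [RingHom.mapMatrix_apply] using f.mapMatrix.map_mul M N
      rw [this, this]
  unfold Matrix.charpoly
  rw [hch, det_mul, det_mul]
  have h1 : det (U.map f) * det (V.map f) = 1 := by
    rw [← det_mul, hP, det_one]
  calc det (U.map f) * det (charmatrix A) * det (V.map f)
      = det (charmatrix A) * (det (U.map f) * det (V.map f)) := by ring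
    _ = det (charmatrix A) := by rw [h1, mul_one]


lemma myEigBound {n : ℕ} (A : Matrix (Fin n) (Fin n) ℝ)
    (hnn : ∀ i j, 0 ≤ A i j) (d t : ℝ)
    (hrow : ∀ i, ∑ j, A i j = d)
    (v : Fin n → ℝ) (hv : v ≠ 0) (heig : A *ᵥ v = t • v) : |t| ≤ d := by
  have hn : 0 < n := by
    by_contra h
    apply hv; funext i
    exact absurd i.2 (by omega)
  obtain ⟨j, -, hj⟩ := Finset.exists_max_image Finset.univ (fun i => |v i|)
    ⟨⟨0, hn⟩, Finset.mem_univ _⟩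
  have hvj : 0 < |v j| := by
    rcases lt_or_eq_of_le (abs_nonneg (v j)) with h | h
    · exact h
    · exfalso; apply hv; funext i
      have h1 := hj i (Finset.mem_univ i)
      have h2 : |v i| = 0 := le_antisymm (by linarith) (abs_nonneg _)
      simpa using abs_eq_zero.mp h2
  have hAv : (A *ᵥ v) j = t * v j := by rw [heig]; rfl
  have h1 : |t * v j| ≤ d * |v j| := by
    rw [← hAv]
    have : |(A *ᵥ v) j| ≤ ∑ k, A j k * |v k| := by
      rw [show (A *ᵥ v) j = ∑ k, A j k * v k from rfl]
      refine le_trans (Finset.abs_sum_le_sum_abs _ _) ?_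
      apply Finset.sum_le_sum
      intro k _
      rw [abs_mul, abs_of_nonneg (hnn j k)]
    refine le_trans this ?_
    calc ∑ k, A j k * |v k| ≤ ∑ k, A j k * |v j| := by
          apply Finset.sum_le_sum
          intro k _
          exact mul_le_mul_of_nonneg_left (hj k (Finset.mem_univ k)) (hnn j k)
      _ = d * |v j| := by rw [← Finset.sum_mul, hrow]
  rw [abs_mul] at h1
  exact le_of_mul_le_mul_right h1 hvj

lemma myQuadBound {n : ℕ} (A : Matrix (Fin n) (Fin n) ℝ) (hA : A.IsHermitian)
    (hnn : ∀ i j, 0 ≤ A i j) (d μ : ℝ) (hμ0 : 0 ≤ μ)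
    (hone : A *ᵥ (fun _ => (1:ℝ)) = d • fun _ => (1:ℝ))
    (hlow : ∀ i, -μ ≤ hA.eigenvalues i)
    (huniq : ∀ i j, μ < hA.eigenvalues i → μ < hA.eigenvalues j → i = j)
    (x : Fin n → ℝ) (hx : ∑ i, x i = 0) :
    |x ⬝ᵥ A *ᵥ x| ≤ μ * ∑ i, x i ^ 2 := by
  set U : Matrix (Fin n) (Fin n) ℝ := (hA.eigenvectorUnitary : Matrix (Fin n) (Fin n) ℝ) with hU
  set eig : Fin n → ℝ := hA.eigenvalues with heigdef
  have hU1 : star U * U = 1 := Unitary.coe_star_mul_self hA.eigenvectorUnitary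
  have hU2 : U * star U = 1 := Unitary.coe_mul_star_self hA.eigenvectorUnitary
  have hspec : A = U * diagonal eig * star U := by
    have h := hA.spectral_theorem
    rwa [show RCLike.ofReal ∘ eig = eig by funext i; simp [RCLike.ofReal_real_eq_id]] at h
  have hstar : star U = Uᵀ := by
    rw [Matrix.star_eq_conjTranspose, Matrix.conjTranspose_eq_transpose_of_trivial]
  have hrow : ∀ i, ∑ j, A i j = d := by
    intro i
    have h := congrFun hone i
    simpa [mulVec, dotProduct] using h
  have hub : ∀ i, eig i ≤ d := by
    intro i
    have hAU : A * U = U * diagonal eig := by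
      rw [hspec, mul_assoc, mul_assoc, hU1, mul_one]
    set v : Fin n → ℝ := fun k => U k i with hv
    have hv0 : v ≠ 0 := by
      intro h0
      have h1 : (star U * U) i i = 1 := by rw [hU1]; simp
      rw [Matrix.mul_apply] at h1
      have h2 : ∀ k, (star U) i k * U k i = 0 := by
        intro k
        have : U k i = 0 := congrFun h0 k
        simp [this]
      rw [Finset.sum_congr rfl (fun k _ => h2 k)] at h1
      simp at h1
    have heigv : A *ᵥ v = eig i • v := by
      funext j
      have h1 : (A * U) j i = (U * diagonal eig) j i := by rw [hAU]
      rw [Matrix.mul_apply, Matrix.mul_diagonal] at h1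
      show ∑ k, A j k * v k = eig i • v j
      simpa [hv, smul_eq_mul, mul_comm] using h1
    exact le_trans (le_abs_self _) (myEigBound A hnn d (eig i) hrow v hv0 heigv)
  set c : Fin n → ℝ := star U *ᵥ x with hc
  set b : Fin n → ℝ := star U *ᵥ (fun _ => (1:ℝ)) with hb
  have key : ∀ v w : Fin n → ℝ, (star U *ᵥ v) ⬝ᵥ (star U *ᵥ w) = v ⬝ᵥ w := by
    intro v w
    rw [show star U *ᵥ v = v ᵥ* U by rw [hstar, mulVec_transpose]]
    rw [← dotProduct_mulVec, mulVec_mulVec, hU2, one_mulVec]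
  have hQ : x ⬝ᵥ A *ᵥ x = ∑ i, eig i * c i ^ 2 := by
    conv_lhs => rw [hspec]
    have h2 : (U * diagonal eig * star U) *ᵥ x = U *ᵥ (diagonal eig *ᵥ c) := by
      rw [hc, mulVec_mulVec, mulVec_mulVec]
    rw [h2, dotProduct_mulVec]
    rw [show x ᵥ* U = c by rw [hc, hstar, mulVec_transpose]]
    simp only [dotProduct, mulVec_diagonal]
    exact Finset.sum_congr rfl fun i _ => by ring
  have hN : ∑ i, c i ^ 2 = ∑ i, x i ^ 2 := by
    have h := key x x
    simp only [dotProduct, ← hc] at h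
    calc ∑ i, c i ^ 2 = ∑ i, c i * c i := Finset.sum_congr rfl fun i _ => sq (c i)
      _ = ∑ i, x i * x i := h
      _ = ∑ i, x i ^ 2 := Finset.sum_congr rfl fun i _ => (sq (x i)).symm
  have hbc : ∑ i, b i * c i = 0 := by
    have h := key (fun _ => (1:ℝ)) x
    simp only [dotProduct, ← hc, ← hb, one_mul] at h
    rw [h, hx]
  have hDb : ∀ i, eig i * b i = d * b i := by
    have h3 : diagonal eig *ᵥ b = d • b := by
      have h4 : star U *ᵥ (A *ᵥ (fun _ => (1:ℝ))) = diagonal eig *ᵥ b := by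
        conv_lhs => rw [hspec]
        rw [show (U * diagonal eig * star U) *ᵥ (fun _ => (1:ℝ))
              = U *ᵥ (diagonal eig *ᵥ b) by rw [hb, mulVec_mulVec, mulVec_mulVec]]
        rw [mulVec_mulVec, hU1, one_mulVec]
      rw [hone, mulVec_smul] at h4
      exact h4.symm
    intro i
    have := congrFun h3 i
    rwa [mulVec_diagonal] at this
  have hup : ∀ i, eig i * c i ^ 2 ≤ μ * c i ^ 2 := by
    by_cases hex : ∃ i₀, μ < eig i₀
    · obtain ⟨i₀, hi₀⟩ := hex
      have hle : ∀ j, j ≠ i₀ → eig j ≤ μ :=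
        fun j hj => le_of_not_gt fun h => hj (huniq j i₀ h hi₀)
      have hbj : ∀ j, j ≠ i₀ → b j = 0 := by
        intro j hj
        have h5 : eig j ≠ d := by
          have h6 := hle j hj
          have h7 := hub i₀
          intro h8; rw [h8] at h6; linarith
        have h9 : (eig j - d) * b j = 0 := by have := hDb j; ring_nf; linarith [hDb j]
        rcases mul_eq_zero.mp h9 with h | h
        · exact absurd (by linarith : eig j = d) h5
        · exact h
      have hbi0 : b i₀ ≠ 0 := by
        intro h0
        have hball : b = 0 := by
          funext j
          by_cases h : j = i₀
          · rw [h]; exact h0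
          · exact hbj j h
        have h6 : U *ᵥ b = (fun _ => (1:ℝ)) := by
          rw [hb, mulVec_mulVec, hU2, one_mulVec]
        rw [hball] at h6
        have h7 := congrFun h6 i₀
        simp [mulVec, dotProduct] at h7
      have hc0 : c i₀ = 0 := by
        have h7 : ∑ j, b j * c j = b i₀ * c i₀ :=
          Finset.sum_eq_single i₀ (fun j _ hj => by rw [hbj j hj, zero_mul]) (by simp)
        rw [h7] at hbc
        rcases mul_eq_zero.mp hbc with h | h
        · exact absurd h hbi0
        · exact h
      intro i
      by_cases h : i = i₀
      · rw [h, hc0]; simp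
      · exact mul_le_mul_of_nonneg_right (hle i h) (sq_nonneg _)
    · push_neg at hex
      intro i
      exact mul_le_mul_of_nonneg_right (hex i) (sq_nonneg _)
  rw [hQ, ← hN]
  rw [abs_le]
  constructor
  · have h1 : ∀ i ∈ Finset.univ, -μ * c i ^ 2 ≤ eig i * c i ^ 2 :=
      fun i _ => mul_le_mul_of_nonneg_right (hlow i) (sq_nonneg _)
    calc -(μ * ∑ i, c i ^ 2) = ∑ i, -μ * c i ^ 2 := by rw [Finset.mul_sum]; simp [neg_mul]
      _ ≤ ∑ i, eig i * c i ^ 2 := Finset.sum_le_sum h1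
  · calc ∑ i, eig i * c i ^ 2 ≤ ∑ i, μ * c i ^ 2 := Finset.sum_le_sum fun i _ => hup i
      _ = μ * ∑ i, c i ^ 2 := by rw [Finset.mul_sum]

lemma myRootsProd {ι : Type*} (s : Finset ι) (f : ι → ℝ) :
    (∏ i ∈ s, (X - C (f i))).roots = s.val.map f := by
  rw [Finset.prod_eq_multiset_prod,
    show (fun i => X - C (f i)) = (fun a : ℝ => X - C a) ∘ f from rfl,
    ← Multiset.map_map, Polynomial.roots_multiset_prod_X_sub_C]

/-- **Alon–Chung lemma.** Let `G` be a `d`-regular graph on `n` vertices whose adjacency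
matrix has eigenvalues `lam 0 ≥ lam 1 ≥ ⋯ ≥ lam (n-1)`, and let
`μ = max (lam 1) |lam (n-1)|`.  For every vertex subset `S` with `|S| = γ n`, the number
`e(S)` of edges of `G` with both endpoints in `S` satisfies
`|e(S) - (1/2) d γ² n| ≤ (1/2) μ γ (1-γ) n`. -/
theorem alon_chung
    (n d : ℕ) (hn : 2 ≤ n) (G : SimpleGraph (Fin n))
    (hreg : G.IsRegularOfDegree d)
    (lam : Fin n → ℝ) (hanti : Antitone lam)
    (hchar : (G.adjMatrix ℝ).charpoly = ∏ i : Fin n, (X - C (lam i)))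
    (μ : ℝ) (hμ : μ = max (lam ⟨1, by omega⟩) |lam ⟨n - 1, by omega⟩|)
    (γ : ℝ) (S : Finset (Fin n)) (hS : (S.card : ℝ) = γ * n) :
    |((G.edgeFinset.filter fun e => ∀ v ∈ e, v ∈ S).card : ℝ)
        - (1 / 2) * d * γ ^ 2 * n| ≤ (1 / 2) * μ * γ * (1 - γ) * n := by
  set A : Matrix (Fin n) (Fin n) ℝ := G.adjMatrix ℝ with hAdef
  have hA : A.IsHermitian := by
    rw [Matrix.IsHermitian, Matrix.conjTranspose_eq_transpose_of_trivial]
    exact G.isSymm_adjMatrix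
  set eig : Fin n → ℝ := hA.eigenvalues with heigdef
  set U : Matrix (Fin n) (Fin n) ℝ := (hA.eigenvectorUnitary : Matrix (Fin n) (Fin n) ℝ) with hUdef
  have hU2 : U * star U = 1 := Unitary.coe_mul_star_self hA.eigenvectorUnitary
  have hspec : A = U * diagonal eig * star U := by
    have h := hA.spectral_theorem
    rwa [show RCLike.ofReal ∘ eig = eig by funext i; simp [RCLike.ofReal_real_eq_id]] at h
  have hchar2 : A.charpoly = ∏ i, (X - C (eig i)) := by
    calc A.charpoly = (U * diagonal eig * star U).charpoly := by rw [← hspec]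
      _ = (diagonal eig).charpoly := myCharpolyConj U _ (star U) hU2
      _ = ∏ i, (X - C (eig i)) := by
          rw [Matrix.charpoly_of_upperTriangular _ (Matrix.blockTriangular_diagonal eig)]
          exact Finset.prod_congr rfl fun i _ => by rw [Matrix.diagonal_apply_eq]
  have hM : Multiset.map lam Finset.univ.val = Multiset.map eig Finset.univ.val := by
    have h2 : (∏ i, (X - C (lam i))).roots = (∏ i, (X - C (eig i))).roots := by
      rw [← hchar, ← hchar2]
    rwa [myRootsProd, myRootsProd] at h2
  have hrep : ∀ i, ∃ j, eig i = lam j := by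
    intro i
    have h : eig i ∈ Multiset.map eig Finset.univ.val :=
      Multiset.mem_map_of_mem _ (Finset.mem_val.mpr (Finset.mem_univ i))
    rw [← hM] at h
    obtain ⟨j, -, hj⟩ := Multiset.mem_map.mp h
    exact ⟨j, hj.symm⟩
  have hμ0 : 0 ≤ μ := hμ ▸ le_trans (abs_nonneg _) (le_max_right _ _)
  have hlam1 : lam ⟨1, by omega⟩ ≤ μ := hμ ▸ le_max_left _ _
  have hlamlast : |lam ⟨n - 1, by omega⟩| ≤ μ := hμ ▸ le_max_right _ _
  have hlow : ∀ i, -μ ≤ eig i := by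
    intro i
    obtain ⟨j, hj⟩ := hrep i
    rw [hj]
    have h1 : lam ⟨n - 1, by omega⟩ ≤ lam j := by
      apply hanti
      rw [Fin.le_def]
      show j.1 ≤ n - 1
      have := j.2
      omega
    have h2 := neg_abs_le (lam ⟨n - 1, by omega⟩)
    linarith
  have huniq : ∀ i j, μ < eig i → μ < eig j → i = j := by
    have hcount : (Finset.univ.filter fun k => μ < eig k).card
        = (Finset.univ.filter fun k => μ < lam k).card := by
      have h := congrArg (Multiset.countP fun r => μ < r) hM
      rw [Multiset.countP_map, Multiset.countP_map] at h
      rw [Finset.card_def, Finset.card_def, Finset.filter_val, Finset.filter_val,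
        ← Multiset.countP_eq_card_filter, ← Multiset.countP_eq_card_filter]
      rw [Multiset.countP_eq_card_filter, Multiset.countP_eq_card_filter]
      exact h.symm
    have hsub : (Finset.univ.filter fun k => μ < lam k).card ≤ 1 := by
      have hss : (Finset.univ.filter fun k => μ < lam k) ⊆ {(⟨0, by omega⟩ : Fin n)} := by
        intro j hjmem
        rw [Finset.mem_filter] at hjmem
        rw [Finset.mem_singleton]
        by_contra hne
        have h1 : (⟨1, by omega⟩ : Fin n) ≤ j := by
          rw [Fin.le_def]
          show 1 ≤ j.1
          have : j.1 ≠ 0 := fun h => hne (Fin.ext h)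
          omega
        have := hanti h1
        linarith [hjmem.2]
      exact le_trans (Finset.card_le_card hss) (by simp)
    intro i j hi hj
    by_contra hne
    have h2 : ({i, j} : Finset (Fin n)) ⊆ Finset.univ.filter fun k => μ < eig k := by
      intro k hk
      rw [Finset.mem_insert, Finset.mem_singleton] at hk
      rcases hk with rfl | rfl <;> simp [hi, hj]
    have h3 : 2 ≤ (Finset.univ.filter fun k => μ < eig k).card := by
      have h4 := Finset.card_le_card h2
      rwa [Finset.card_insert_of_notMem (by simp [hne]), Finset.card_singleton] at h4
    omega
  -- combinatorial side
  set χ : Fin n → ℝ := fun u => if u ∈ S then 1 else 0 with hχdef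
  set x : Fin n → ℝ := fun u => χ u - γ with hxdef
  have hsumχ : ∑ u, χ u = γ * n := by
    rw [← hS]
    simp [hχdef, Finset.sum_boole, Finset.filter_mem_eq_inter]
  have hone : A *ᵥ (fun _ => (1:ℝ)) = (d:ℝ) • fun _ => (1:ℝ) := by
    funext v
    simp [hAdef, SimpleGraph.adjMatrix_mulVec_apply, hreg v]
  have hx : ∑ i, x i = 0 := by
    simp only [hxdef, Finset.sum_sub_distrib, hsumχ, Finset.sum_const, Finset.card_univ,
      Fintype.card_fin, nsmul_eq_mul]
    ring
  have hxx : ∑ i, x i ^ 2 = (γ - γ ^ 2) * n := by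
    have hptw : ∀ u, x u ^ 2 = (1 - 2 * γ) * χ u + γ ^ 2 := by
      intro u
      by_cases h : u ∈ S <;> simp [hxdef, hχdef, h] <;> ring
    rw [Finset.sum_congr rfl fun u _ => hptw u]
    rw [Finset.sum_add_distrib, ← Finset.mul_sum, hsumχ, Finset.sum_const, Finset.card_univ,
      Fintype.card_fin, nsmul_eq_mul]
    ring
  have hAT : Aᵀ = A := G.isSymm_adjMatrix
  have hsym : ∀ v w : Fin n → ℝ, v ⬝ᵥ A *ᵥ w = w ⬝ᵥ A *ᵥ v := by
    intro v w
    rw [dotProduct_mulVec, ← mulVec_transpose, hAT, dotProduct_comm]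
  have hχ1 : χ ⬝ᵥ A *ᵥ (fun _ => (1:ℝ)) = d * (γ * n) := by
    rw [hone]
    calc χ ⬝ᵥ ((d:ℝ) • fun _ => (1:ℝ)) = ∑ u, χ u * d := by
          simp [dotProduct]
      _ = d * (γ * n) := by rw [← Finset.sum_mul, hsumχ]; ring
  have h11 : (fun _ => (1:ℝ)) ⬝ᵥ A *ᵥ (fun _ => (1:ℝ)) = d * n := by
    rw [hone]
    simp [dotProduct, Finset.sum_const, Finset.card_univ, mul_comm]
  set E : ℕ := (G.edgeFinset.filter fun e => ∀ v ∈ e, v ∈ S).card with hEdef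
  have hQχ : χ ⬝ᵥ A *ᵥ χ = 2 * E := by
    have hH : ∃ H : SimpleGraph (Fin n), ∀ a b, H.Adj a b ↔ (G.Adj a b ∧ a ∈ S ∧ b ∈ S) := by
      refine ⟨⟨fun a b => G.Adj a b ∧ a ∈ S ∧ b ∈ S, ?_, ?_⟩, fun a b => Iff.rfl⟩
      · refine ⟨fun a b h => ?_⟩
        exact ⟨h.1.symm, h.2.2, h.2.1⟩
      · refine ⟨fun a h => ?_⟩
        exact G.loopless.irrefl a h.1
    obtain ⟨H, hHadj⟩ := hH
    have hEF : H.edgeFinset = G.edgeFinset.filter (fun e => ∀ v ∈ e, v ∈ S) := by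
      ext e
      refine Sym2.ind (fun a b => ?_) e
      simp only [SimpleGraph.mem_edgeFinset, SimpleGraph.mem_edgeSet, Finset.mem_filter,
        Sym2.mem_iff, hHadj]
      constructor
      · rintro ⟨h1, h2, h3⟩
        exact ⟨h1, fun v hv => by rcases hv with rfl | rfl <;> assumption⟩
      · rintro ⟨h1, h2⟩
        exact ⟨h1, h2 a (Or.inl rfl), h2 b (Or.inr rfl)⟩
    have h2m := SimpleGraph.two_mul_card_edgeFinset (G := H)
    rw [hAdef, SimpleGraph.dotProduct_mulVec_adjMatrix]
    have hptw : ∀ i j : Fin n, (if G.Adj i j then χ i * χ j else 0)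
        = if H.Adj i j then (1:ℝ) else 0 := by
      intro i j
      by_cases h1 : G.Adj i j <;> by_cases h2 : i ∈ S <;> by_cases h3 : j ∈ S <;>
        simp [hχdef, h1, h2, h3, hHadj]
    calc (∑ i, ∑ j, if G.Adj i j then χ i * χ j else 0)
        = ∑ i, ∑ j, if H.Adj i j then (1:ℝ) else 0 := by
          exact Finset.sum_congr rfl fun i _ => Finset.sum_congr rfl fun j _ => hptw i j
      _ = ∑ p : Fin n × Fin n, if H.Adj p.1 p.2 then (1:ℝ) else 0 := by
          rw [← Finset.univ_product_univ, Finset.sum_product]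
      _ = ((Finset.univ.filter fun p : Fin n × Fin n => H.Adj p.1 p.2).card : ℝ) := by
          rw [Finset.sum_boole]
      _ = ((2 * H.edgeFinset.card : ℕ) : ℝ) := by
          rw [h2m]
      _ = 2 * E := by rw [hEF, hEdef]; push_cast; ring
  have hxe : x = χ - γ • (fun _ => (1:ℝ)) := by
    funext u
    simp [hxdef]
  have hxA : x ⬝ᵥ A *ᵥ x = 2 * E - d * γ ^ 2 * n := by
    rw [hxe, mulVec_sub, mulVec_smul, sub_dotProduct, smul_dotProduct, dotProduct_sub,
      dotProduct_sub, dotProduct_smul, dotProduct_smul]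
    rw [hQχ, hχ1, hsym (fun _ => (1:ℝ)) χ, hχ1, h11]
    simp only [smul_eq_mul]
    ring
  have hnn : ∀ i j, 0 ≤ A i j := by
    intro i j
    rw [hAdef, SimpleGraph.adjMatrix_apply]
    split <;> norm_num
  have hbound := myQuadBound A hA hnn d μ hμ0 hone hlow huniq x hx
  rw [hxA, hxx] at hbound
  have habs : |(E:ℝ) - 1 / 2 * d * γ ^ 2 * n| = |2 * E - d * γ ^ 2 * n| / 2 := by
    rw [show (E:ℝ) - 1 / 2 * d * γ ^ 2 * n = (2 * E - d * γ ^ 2 * n) / 2 by ring, abs_div,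
      abs_two]
  rw [habs]
  have h9 : (1:ℝ) / 2 * μ * γ * (1 - γ) * n = μ * ((γ - γ ^ 2) * n) / 2 := by ring
  rw [h9]
  linarith
end

section
/- Let d > μ > 0 and 0 < δ₀ ≤ 1 be reals with n > 0. Then d²δ₀n/[δ₀(d²−μ²)+μ²] ≥ [δ₀d² − μ²(1−δ₀)]·n/(δ₀d²); i.e., the Janwa–Lal minimum-distance bound for the Alon et al. expander codes is at least as large as the original Alon et al. bound. -/
/-- For reals `0 < μ < d`, `0 < δ₀ ≤ 1`, `n > 0`:
`d² δ₀ n / (δ₀ (d² - μ²) + μ²) ≥ (δ₀ d² - μ² (1 - δ₀)) n / (δ₀ d²)`. -/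
theorem janwa_lal_ge_alon_et_al (d μ δ₀ n : ℝ) (hμ : 0 < μ) (hμd : μ < d)
    (hδ0 : 0 < δ₀) (hδ1 : δ₀ ≤ 1) (hn : 0 < n) :
    d ^ 2 * δ₀ * n / (δ₀ * (d ^ 2 - μ ^ 2) + μ ^ 2)
      ≥ (δ₀ * d ^ 2 - μ ^ 2 * (1 - δ₀)) * n / (δ₀ * d ^ 2) := by
  have hd : 0 < d := hμ.trans hμd
  have h1 : 0 < δ₀ * (d ^ 2 - μ ^ 2) + μ ^ 2 := by nlinarith [pow_pos hμ 2, mul_nonneg hδ0.le (by nlinarith : (0:ℝ) ≤ d ^ 2 - μ ^ 2)]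
  have h2 : 0 < δ₀ * d ^ 2 := by positivity
  rw [ge_iff_le, div_le_div_iff₀ h2 h1]
  nlinarith [mul_nonneg hn.le (sq_nonneg (μ ^ 2 * (1 - δ₀)))]
end
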